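/- arXiv:2207.06757 — 2 statements merged into one kernel-verified Lean document; each statement's English description precedes it below -/
import Mathlib

section
/- Let F be a field, R ≥ r ≥ 0 integers, and s ≥ 1. For i = 1,...,s let G_i be an R×w matrix over F whose column space intersects trivially the span of vectors b_1,...,b_{R-r} ∈ F^R, where b_1,...,b_{R-r} are linearly independent. Let B' = [b_1 ... b_{R-r}] (an R×(R-r) matrix). Form the (Rs)×(w + (R-r)s) block matrix M whose i-th block row is [G_i | 0 ... 0 B' 0 ... 0] with B' in the i-th block column of the right part. Then rank(M) = rank(G) + (R-r)s, where G is the (Rs)×w matrix obtained by stacking G_1,...,G_s. -/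
open Matrix

open scoped Kronecker

/-! The right-hand part of the matrix is `1 ⊗ₖ B'` with `B' = [b_1 … b_{R-r}]`, which has full
column rank `(R - r) s` because the `b_k` are independent. Its column space meets that of the
stacked `G` trivially: on the `i`-th block of rows a common vector lies in
`col G_i ∩ span b = 0`. When two column spaces meet trivially, `rank [A | B] = rank A + rank B`. -/

namespace Matrix

variable {ι m n n₁ n₂ k F : Type*} [Fintype n] [Fintype n₁] [Fintype n₂] [Fintype k]

theorem rank_of_mulVec_injective {R : Type*} [CommRing R] [StrongRankCondition R]
    {A : Matrix m n R} (hA : Function.Injective A.mulVec) : A.rank = Fintype.card n := by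
  rw [rank, LinearMap.finrank_range_of_inj hA, Module.finrank_fintype_fun_eq_card]

variable [Field F]

theorem range_mulVecLin_fromCols (A : Matrix m n₁ F) (B : Matrix m n₂ F) :
    LinearMap.range (fromCols A B).mulVecLin =
      LinearMap.range A.mulVecLin ⊔ LinearMap.range B.mulVecLin := by
  have hcol : (fromCols A B).col = Sum.elim A.col B.col := by
    funext c; cases c <;> rfl
  simp only [range_mulVecLin, hcol, Set.Sum.elim_range, Submodule.span_union]

theorem rank_fromCols_of_disjoint [Fintype m] {A : Matrix m n₁ F} {B : Matrix m n₂ F}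
    (h : Disjoint (LinearMap.range A.mulVecLin) (LinearMap.range B.mulVecLin)) :
    (fromCols A B).rank = A.rank + B.rank := by
  have := Submodule.finrank_sup_add_finrank_inf_eq
    (LinearMap.range A.mulVecLin) (LinearMap.range B.mulVecLin)
  rwa [h.eq_bot, finrank_bot, add_zero, ← range_mulVecLin_fromCols] at this

variable [Fintype ι] [DecidableEq ι]

theorem one_kronecker_mulVec_apply (B : Matrix m k F) (y : ι × k → F) (i : ι) (t : m) :
    ((1 : Matrix ι ι F) ⊗ₖ B).mulVec y (i, t) = (B *ᵥ fun c => y (i, c)) t := by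
  simp [mulVec, dotProduct, one_apply, Fintype.sum_prod_type, ite_mul]

theorem mulVec_one_kronecker_injective {B : Matrix m k F} (hB : Function.Injective B.mulVec) :
    Function.Injective ((1 : Matrix ι ι F) ⊗ₖ B).mulVec := by
  intro y z hyz
  funext ⟨i, c⟩
  have hblock : (B *ᵥ fun c => y (i, c)) = B *ᵥ fun c => z (i, c) := by
    funext t
    simpa only [one_kronecker_mulVec_apply] using congrFun hyz (i, t)
  exact congrFun (hB hblock) c

theorem disjoint_range_stack_one_kronecker (G : ι → Matrix m n F) {B : Matrix m k F}
    (h : ∀ i, Disjoint (LinearMap.range (G i).mulVecLin) (LinearMap.range B.mulVecLin)) :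
    Disjoint (LinearMap.range (of fun (p : ι × m) j => G p.1 p.2 j).mulVecLin)
      (LinearMap.range ((1 : Matrix ι ι F) ⊗ₖ B).mulVecLin) := by
  rw [Submodule.disjoint_def]
  rintro _ ⟨x, rfl⟩ ⟨y, hy⟩
  funext ⟨i, t⟩
  have hblock : G i *ᵥ x = B *ᵥ fun c => y (i, c) := by
    funext t
    exact (congrFun hy (i, t)).symm.trans (one_kronecker_mulVec_apply B y i t)
  exact congrFun (Submodule.disjoint_def.mp (h i) _ ⟨x, rfl⟩ ⟨_, hblock.symm⟩) t

end Matrix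

theorem stmt4_general (F : Type*) [Field F] (R r s w : ℕ)
    (G : Fin s → Matrix (Fin R) (Fin w) F)
    (b : Fin (R - r) → (Fin R → F))
    (hb : LinearIndependent F b)
    (hinter : ∀ i, LinearMap.range (G i).mulVecLin ⊓ Submodule.span F (Set.range b) = ⊥) :
    (Matrix.of (fun (p : Fin s × Fin R) (c : Fin w ⊕ Fin s × Fin (R - r)) =>
        Sum.elim (fun j => G p.1 p.2 j)
          (fun jc => if p.1 = jc.1 then b jc.2 p.2 else 0) c)).rank
      = (Matrix.of fun (p : Fin s × Fin R) (j : Fin w) => G p.1 p.2 j).rank + (R - r) * s := by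
  set B : Matrix (Fin R) (Fin (R - r)) F := (of b)ᵀ
  have hM : (Matrix.of (fun (p : Fin s × Fin R) (c : Fin w ⊕ Fin s × Fin (R - r)) =>
        Sum.elim (fun j => G p.1 p.2 j)
          (fun jc => if p.1 = jc.1 then b jc.2 p.2 else 0) c)) =
      fromCols (of fun p j => G p.1 p.2 j) ((1 : Matrix (Fin s) (Fin s) F) ⊗ₖ B) := by
    ext p (j | jc)
    · rfl
    · simp [B, one_apply]
  have hB : LinearMap.range B.mulVecLin = Submodule.span F (Set.range b) := range_mulVecLin B
  have hBinj : Function.Injective B.mulVec := mulVec_injective_iff.mpr hb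
  rw [hM, rank_fromCols_of_disjoint (disjoint_range_stack_one_kronecker G fun i => ?_),
    rank_of_mulVec_injective (mulVec_one_kronecker_injective hBinj)]
  · simp [mul_comm]
  · rw [hB, disjoint_iff]
    exact hinter i

/-- rank of the block matrix [G | block-diagonal B'] equals
rank(G) + (R-r)s, where each block row is [G_i | 0 … B' … 0], the column space of each
G_i meets the span of the linearly independent vectors b_1,…,b_{R-r} trivially, and
B' = [b_1 … b_{R-r}]. -/
theorem stmt4 (F : Type*) [Field F] [DecidableEq F] (R r s w : ℕ) (hr : r ≤ R) (hs : 1 ≤ s)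
    (G : Fin s → Matrix (Fin R) (Fin w) F)
    (b : Fin (R - r) → (Fin R → F))
    (hb : LinearIndependent F b)
    (hinter : ∀ i, LinearMap.range (G i).mulVecLin ⊓ Submodule.span F (Set.range b) = ⊥) :
    (Matrix.of (fun (p : Fin s × Fin R) (c : Fin w ⊕ Fin s × Fin (R - r)) =>
        Sum.elim (fun j => G p.1 p.2 j)
          (fun jc => if p.1 = jc.1 then b jc.2 p.2 else 0) c)).rank
      = (Matrix.of fun (p : Fin s × Fin R) (j : Fin w) => G p.1 p.2 j).rank + (R - r) * s :=
  stmt4_general F R r s w G b hb hinter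
end

section
/- Let G = (V, E) be a finite directed acyclic graph, W ⊆ E an edge subset, D_W the set of source nodes from which some edge of W is reachable, and W' a minimum-size edge cut separating W from D_W (i.e., every path from a node of D_W to an edge of W passes through an edge of W', and no smaller edge set has this property). Then D_{W'} = D_W, where D_{W'} is the set of source nodes from which some edge of W' is reachable. -/
/-- Reachability in a directed graph, using only edges in the set `A`. -/
def GReach {V E : Type*} (tail head : E → V) (A : Set E) : V → V → Prop :=
  Relation.ReflTransGen (fun a b => ∃ e ∈ A, tail e = a ∧ head e = b)

/-- `DWset tail head S W` is the set of source nodes in `S` from which some edge of `W`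
is reachable. -/
def DWset {V E : Type*} (tail head : E → V) (S : Set V) (W : Set E) : Set V :=
  {σ ∈ S | ∃ e ∈ W, GReach tail head Set.univ σ (tail e)}

/-- `SepEdgeCut tail head C W U` : the edge set `C` is a cut separating the edge set `W`
from the node set `U`: every directed path from a node of `U` to an edge of `W` passes
through an edge of `C` (an edge `e ∈ W ∩ C` is cut at its subdivision point). -/
def SepEdgeCut {V E : Type*} (tail head : E → V) (C W : Set E) (U : Set V) : Prop :=
  ∀ u ∈ U, ∀ e ∈ W, e ∉ C → ¬ GReach tail head Cᶜ u (tail e)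

/-!
A cut `C` separating `W` from `D_W` is met by every path from `D_W` to `W`, so `D_W ⊆ D_C`.
Conversely, if `C` is a minimum cut then `C \ {e'}` is no cut for any `e' ∈ C`; a path witnessing
this must pass through `e'` and end at an edge of `W`, so every source reaching `e'` also
reaches `W`, i.e. `D_C ⊆ D_W`.
-/

namespace GReach

variable {V E : Type*} {tail head : E → V}

theorem mono_edges {A B : Set E} (hAB : A ⊆ B) {x y : V} (h : GReach tail head A x y) :
    GReach tail head B x y :=
  Relation.ReflTransGen.mono (fun _ _ ⟨e, he, hx, hy⟩ => ⟨e, hAB he, hx, hy⟩) _ _ h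

theorem compl_or_exists_tail (C : Set E) {x y : V} (h : GReach tail head Set.univ x y) :
    GReach tail head Cᶜ x y ∨ ∃ e ∈ C, GReach tail head Set.univ x (tail e) := by
  induction h using Relation.ReflTransGen.head_induction_on with
  | refl => exact Or.inl .refl
  | head hstep _ ih =>
    obtain ⟨f, -, rfl, hfz⟩ := hstep
    by_cases hfC : f ∈ C
    · exact Or.inr ⟨f, hfC, .refl⟩
    · rcases ih with h | ⟨e, he, h⟩
      · exact Or.inl (.head ⟨f, hfC, rfl, hfz⟩ h)
      · exact Or.inr ⟨e, he, .head ⟨f, trivial, rfl, hfz⟩ h⟩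

theorem or_of_insert {B : Set E} {e' : E} {x y : V}
    (h : GReach tail head (insert e' B) x y) :
    GReach tail head B x y ∨ GReach tail head (insert e' B) (head e') y := by
  induction h using Relation.ReflTransGen.head_induction_on with
  | refl => exact Or.inl .refl
  | head hstep htail ih =>
    obtain ⟨f, hf, hfx, rfl⟩ := hstep
    rcases hf with rfl | hfB
    · exact Or.inr htail
    · exact ih.imp_left (.head ⟨f, hfB, hfx, rfl⟩)

theorem tail_head (e : E) : GReach tail head Set.univ (tail e) (head e) :=
  .single ⟨e, trivial, rfl, rfl⟩

end GReach

section Cuts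

variable {V E : Type*} (tail head : E → V) (S : Set V)

theorem DWset_subset_of_sepEdgeCut {C W : Set E}
    (hC : SepEdgeCut tail head C W (DWset tail head S W)) :
    DWset tail head S W ⊆ DWset tail head S C := by
  rintro σ hσ
  obtain ⟨hσS, e, heW, hreach⟩ := hσ
  refine ⟨hσS, ?_⟩
  by_cases heC : e ∈ C
  · exact ⟨e, heC, hreach⟩
  · exact (hreach.compl_or_exists_tail C).resolve_left (hC σ ⟨hσS, e, heW, hreach⟩ e heW heC)

theorem DWset_subset_of_forall_not_sepEdgeCut_diff {C W : Set E} {U : Set V}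
    (hC : SepEdgeCut tail head C W U)
    (hmin : ∀ e' ∈ C, ¬ SepEdgeCut tail head (C \ {e'}) W U) :
    DWset tail head S C ⊆ DWset tail head S W := by
  rintro σ ⟨hσS, e', he'C, hσe'⟩
  refine ⟨hσS, ?_⟩
  obtain ⟨u, hu, e, heW, he, hpath⟩ : ∃ u ∈ U, ∃ e ∈ W, e ∉ C \ {e'} ∧
      GReach tail head (C \ {e'})ᶜ u (tail e) := by
    simpa [SepEdgeCut] using hmin e' he'C
  by_cases hee' : e = e'
  · exact ⟨e, heW, hee' ▸ hσe'⟩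
  have heC : e ∉ C := fun h => he ⟨h, hee'⟩
  have hcompl : (C \ {e'})ᶜ ⊆ insert e' Cᶜ := by
    intro f hf
    by_cases hfe : f = e'
    · exact Or.inl hfe
    · exact Or.inr fun hfC => hf ⟨hfC, hfe⟩
  rcases (hpath.mono_edges hcompl).or_of_insert with hCc | hhead
  · exact absurd hCc (hC u hu e heW heC)
  · exact ⟨e, heW, hσe'.trans ((GReach.tail_head e').trans
      (hhead.mono_edges (Set.subset_univ _)))⟩

end Cuts

theorem stmt11_general {V E : Type*} [DecidableEq E]
    (tail head : E → V) (S : Set V)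
    (W W' : Finset E)
    (hcut : SepEdgeCut tail head ↑W' ↑W (DWset tail head S ↑W))
    (hmin : ∀ C : Finset E,
      SepEdgeCut tail head ↑C ↑W (DWset tail head S ↑W) → W'.card ≤ C.card) :
    DWset tail head S ↑W' = DWset tail head S ↑W := by
  have hminimal : ∀ e' ∈ (W' : Set E),
      ¬ SepEdgeCut tail head (↑W' \ {e'}) ↑W (DWset tail head S ↑W) := by
    intro e' he' hsep
    have hle := hmin (W'.erase e') (by rwa [Finset.coe_erase])
    exact (Finset.card_erase_lt_of_mem he').not_ge hle
  exact (DWset_subset_of_forall_not_sepEdgeCut_diff tail head S hcut hminimal).antisymm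
    (DWset_subset_of_sepEdgeCut tail head S hcut)

/-- Lemma 1: if `W'` is a minimum cut separating the edge set `W` from
`D_W` in a finite DAG, then `D_{W'} = D_W`. -/
theorem stmt11 {V E : Type*} [Fintype V] [Fintype E] [DecidableEq E]
    (tail head : E → V) (S : Set V)
    (hS : ∀ σ ∈ S, ∀ e : E, head e ≠ σ)
    (hacyc : ∀ v : V, ¬ Relation.TransGen (fun a b => ∃ e : E, tail e = a ∧ head e = b) v v)
    (W W' : Finset E)
    (hcut : SepEdgeCut tail head ↑W' ↑W (DWset tail head S ↑W))
    (hmin : ∀ C : Finset E,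
      SepEdgeCut tail head ↑C ↑W (DWset tail head S ↑W) → W'.card ≤ C.card) :
    DWset tail head S ↑W' = DWset tail head S ↑W :=
  stmt11_general tail head S W W' hcut hmin
end
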